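/- Let Ω ⊂ ℝ^{n+1} be a uniform domain with n-Ahlfors regular boundary equipped with a dyadic system D and Whitney regions U_Q. There exists θ₀ ∈ (0,1), depending only on the Whitney construction constant K₀ and the structural constants, with the following property: for every Q ∈ D, writing X_Q for the corkscrew point relative to x_Q at scale r_Q = 10^{−5}a₀ℓ(Q), x̂_Q ∈ ∂Ω for a touching point of X_Q (i.e. |X_Q − x̂_Q| = δ(X_Q)), and P_Q(θ) := x̂_Q + θ(X_Q − x̂_Q), if Q' ∈ D satisfies B(P_Q(θ₀), (γθ₀/10) r_Q) ∩ U_{Q'} ≠ ∅ (γ the corkscrew constant), then Q' ⊆ Q and ℓ(Q') < ℓ(Q). -/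
import Mathlib


open MeasureTheory Metric Set Filter Topology

noncomputable section

/-- Euclidean space ℝ^d. -/
abbrev Euc (d : ℕ) : Type := EuclideanSpace ℝ (Fin d)

variable {d : ℕ}

/-- The distance between two subsets of Euclidean space. -/
def setDist (s t : Set (Euc d)) : ℝ := sInf (Set.image2 dist s t)

/-- δ(X) = dist(X, ∂Ω). -/
def bdist (Ω : Set (Euc d)) (X : Euc d) : ℝ := Metric.infDist X (frontier Ω)

/-- Surface measure σ = Hⁿ restricted to ∂Ω. -/
def smeasure (n : ℕ) (Ω : Set (Euc d)) : Measure (Euc d) :=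
  (μH[(n : ℝ)]).restrict (frontier Ω)

/-- Corkscrew condition with constant γ: for every boundary point x and every scale
r ∈ (0, diam Ω) there is a corkscrew point Y with B(Y, γr) ⊆ B(x,r) ∩ Ω. -/
def CorkscrewCondition (Ω : Set (Euc d)) (γ : ℝ) : Prop :=
  ∀ x ∈ frontier Ω, ∀ r : ℝ, 0 < r → ENNReal.ofReal r < EMetric.diam Ω →
    ∃ Y : Euc d, ball Y (γ * r) ⊆ ball x r ∩ Ω

/-- Harnack chain condition with constant C and chain-length function N. -/
def HarnackChainCondition (Ω : Set (Euc d)) (C : ℝ) (N : ℝ → ℕ) : Prop :=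
  ∀ Λ : ℝ, 0 ≤ Λ → ∀ ρ : ℝ, 0 < ρ → ∀ X ∈ Ω, ∀ X' ∈ Ω,
    ρ ≤ bdist Ω X → ρ ≤ bdist Ω X' → dist X X' ≤ Λ * ρ →
    ∃ (J : ℕ) (c : ℕ → Euc d) (rad : ℕ → ℝ), J + 1 ≤ N Λ ∧
      X ∈ ball (c 0) (rad 0) ∧ X' ∈ ball (c J) (rad J) ∧
      (∀ j < J, (ball (c j) (rad j) ∩ ball (c (j + 1)) (rad (j + 1))).Nonempty) ∧
      ∀ j ≤ J, 0 < rad j ∧ ball (c j) (rad j) ⊆ Ω ∧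
        C⁻¹ * Metric.diam (ball (c j) (rad j)) ≤ setDist (ball (c j) (rad j)) (frontier Ω) ∧
        setDist (ball (c j) (rad j)) (frontier Ω) ≤ C * Metric.diam (ball (c j) (rad j))

/-- A uniform domain: an open connected set satisfying the corkscrew and
Harnack chain conditions. -/
structure UniformDomain (Ω : Set (Euc d)) : Prop where
  isOpen : IsOpen Ω
  connected : IsConnected Ω
  corkscrew : ∃ γ > 0, CorkscrewCondition Ω γ
  harnack : ∃ C > 0, ∃ N : ℝ → ℕ, HarnackChainCondition Ω C N

/-- n-Ahlfors regularity of a set E: C⁻¹rⁿ ≤ Hⁿ(E ∩ B(x,r)) ≤ Crⁿ. -/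
def AhlforsRegular (n : ℕ) (E : Set (Euc d)) : Prop :=
  ∃ C : ℝ, 1 ≤ C ∧ ∀ x ∈ E, ∀ r : ℝ, 0 < r → ENNReal.ofReal r < EMetric.diam E →
    ENNReal.ofReal (C⁻¹ * r ^ n) ≤ μH[(n : ℝ)] (E ∩ ball x r) ∧
      μH[(n : ℝ)] (E ∩ ball x r) ≤ ENNReal.ofReal (C * r ^ n)

/-- A real (not necessarily symmetric) uniformly elliptic bounded measurable matrix. -/
def EllipticMatrix (A : Euc d → Matrix (Fin d) (Fin d) ℝ) (Λ₀ : ℝ) : Prop :=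
  1 ≤ Λ₀ ∧ (∀ i j, Measurable fun X => A X i j) ∧
    ∀ᵐ X ∂(volume : Measure (Euc d)),
      (∀ ξ : Euc d, Λ₀⁻¹ * ‖ξ‖ ^ 2 ≤ ∑ i, ∑ j, A X i j * ξ j * ξ i) ∧
      ∀ i j, |A X i j| ≤ Λ₀

/-- Test functions: smooth compactly supported functions with support inside Ω. -/
def IsTestFun (Ω : Set (Euc d)) (φ : Euc d → ℝ) : Prop :=
  ContDiff ℝ (⊤ : ℕ∞) φ ∧ HasCompactSupport φ ∧ tsupport φ ⊆ Ω

/-- g is the weak gradient of u on Ω (both locally integrable on Ω). -/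
def HasWeakGradientOn (u : Euc d → ℝ) (g : Euc d → Euc d) (Ω : Set (Euc d)) : Prop :=
  LocallyIntegrableOn u Ω ∧ LocallyIntegrableOn g Ω ∧
    ∀ φ : Euc d → ℝ, IsTestFun Ω φ → ∀ i : Fin d,
      ∫ X in Ω, u X * gradient φ X i = - ∫ X in Ω, g X i * φ X

/-- u ∈ W^{1,2}_loc(Ω) with weak gradient g is a weak solution of
Lu = -div(A ∇u) = 0 in Ω. -/
def IsWeakSolution (Ω : Set (Euc d)) (A : Euc d → Matrix (Fin d) (Fin d) ℝ)
    (u : Euc d → ℝ) (g : Euc d → Euc d) : Prop :=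
  HasWeakGradientOn u g Ω ∧ LocallyIntegrableOn (fun X => ‖g X‖ ^ 2) Ω ∧
    ∀ φ : Euc d → ℝ, IsTestFun Ω φ →
      ∫ X in Ω, ∑ i, ∑ j, A X i j * g X j * gradient φ X i = 0

/-- The L^∞(Ω) norm of u (essential supremum over Ω). -/
def supNorm (Ω : Set (Euc d)) (u : Euc d → ℝ) : ℝ :=
  essSup (fun X => |u X|) (volume.restrict Ω)

/-- u ∈ L^∞(Ω). -/
def BoundedOn (Ω : Set (Euc d)) (u : Euc d → ℝ) : Prop :=
  AEStronglyMeasurable u (volume.restrict Ω) ∧ ∃ M : ℝ, ∀ᵐ X ∂(volume.restrict Ω), |u X| ≤ M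

/-- ω is the family {ω^X}_{X ∈ Ω} of elliptic measures of L = -div(A∇) in Ω:
Borel probability measures on ∂Ω so that continuous compactly supported boundary
data is resolved by the corresponding Perron solution. -/
def IsEllipticMeasure (Ω : Set (Euc d)) (A : Euc d → Matrix (Fin d) (Fin d) ℝ)
    (ω : Euc d → Measure (Euc d)) : Prop :=
  (∀ X ∈ Ω, IsProbabilityMeasure (ω X) ∧ ω X (frontier Ω)ᶜ = 0) ∧
    ∀ f : Euc d → ℝ, Continuous f → HasCompactSupport f →
      ∃ (u : Euc d → ℝ) (g : Euc d → Euc d),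
        ContinuousOn u (closure Ω) ∧ (∀ x ∈ frontier Ω, u x = f x) ∧
        IsWeakSolution Ω A u g ∧ ∀ X ∈ Ω, u X = ∫ y, f y ∂(ω X)

/-- The A_∞(σ) condition for the elliptic measure family ω with respect to the
surface measure σ = Hⁿ|_{∂Ω}. -/
def AInfinity (n : ℕ) (Ω : Set (Euc d)) (ω : Euc d → Measure (Euc d)) : Prop :=
  ∃ C : ℝ, 1 ≤ C ∧ ∃ s : ℝ, 0 < s ∧
    ∀ x ∈ frontier Ω, ∀ r : ℝ, 0 < r →
      ENNReal.ofReal (4 * r) < EMetric.diam (frontier Ω) →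
      ∀ E : Set (Euc d), MeasurableSet E → E ⊆ ball x r ∩ frontier Ω →
        ∀ Y ∈ Ω \ ball x (4 * r),
          (ω Y E).toReal ≤
            C * ((smeasure n Ω E).toReal / (smeasure n Ω (ball x r ∩ frontier Ω)).toReal) ^ s *
              (ω Y (ball x r ∩ frontier Ω)).toReal

/-- The non-tangential cone Γ^m(x) of aperture m at the boundary point x. -/
def ntCone (Ω : Set (Euc d)) (m : ℝ) (x : Euc d) : Set (Euc d) :=
  {Z | Z ∈ Ω ∧ dist Z x < m * bdist Ω Z}

/-- Non-tangential convergence: G(Y) → c as Y → x within some cone Γ^m(x). -/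
def NTLimit (Ω : Set (Euc d)) (G : Euc d → ℝ) (x : Euc d) (c : ℝ) : Prop :=
  ∃ m : ℝ, 1 < m ∧ ∀ Y : ℕ → Euc d, (∀ k, Y k ∈ ntCone Ω m x) →
    Tendsto Y atTop (𝓝 x) → Tendsto (fun k => G (Y k)) atTop (𝓝 c)

/-- A dyadic (Christ–David) system of cubes on a set E ⊆ ℝ^d: for each generation
k ∈ ℤ a countable Borel partition of E into cubes, nested across generations, each
cube Q of generation k having a center x_Q with
E ∩ B(x_Q, a₀2^{-k}) ⊆ Q ⊆ E ∩ B(x_Q, a₁2^{-k}). -/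
structure DyadicSystem (d : ℕ) (E : Set (Euc d)) where
  cubes : Set (Set (Euc d))
  gen : Set (Euc d) → ℤ
  ctr : Set (Euc d) → Euc d
  a0 : ℝ
  a1 : ℝ
  a0_pos : 0 < a0
  a0_le_a1 : a0 ≤ a1
  countable : ∀ k : ℤ, {Q | Q ∈ cubes ∧ gen Q = k}.Countable
  subset_E : ∀ Q ∈ cubes, Q ⊆ E
  measurableSet : ∀ Q ∈ cubes, MeasurableSet Q
  cover : ∀ k : ℤ, ∀ x ∈ E, ∃ Q ∈ cubes, gen Q = k ∧ x ∈ Q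
  pairwise_disjoint : ∀ Q ∈ cubes, ∀ Q' ∈ cubes, gen Q = gen Q' → Q ≠ Q' → Disjoint Q Q'
  nested : ∀ Q ∈ cubes, ∀ Q' ∈ cubes, gen Q ≤ gen Q' → Q' ⊆ Q ∨ Disjoint Q Q'
  ctr_mem : ∀ Q ∈ cubes, ctr Q ∈ Q
  ball_subset : ∀ Q ∈ cubes, E ∩ ball (ctr Q) (a0 * 2 ^ (-gen Q)) ⊆ Q
  subset_ball : ∀ Q ∈ cubes, Q ⊆ E ∩ ball (ctr Q) (a1 * 2 ^ (-gen Q))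

namespace DyadicSystem

variable {d : ℕ} {E : Set (Euc d)}

/-- The side length ℓ(Q) = 2^{-k} of a cube of generation k. -/
def len (D : DyadicSystem d E) (Q : Set (Euc d)) : ℝ := 2 ^ (-D.gen Q)

/-- The corkscrew scale r_Q = 10⁻⁵ a₀ ℓ(Q) associated to a cube Q. -/
def cRad (D : DyadicSystem d E) (Q : Set (Euc d)) : ℝ := (100000 : ℝ)⁻¹ * D.a0 * D.len Q

/-- Q' is a (dyadic) child of Q. -/
def Child (D : DyadicSystem d E) (Q Q' : Set (Euc d)) : Prop :=
  Q' ∈ D.cubes ∧ Q' ⊆ Q ∧ D.gen Q' = D.gen Q + 1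

/-- Q and Q' are siblings (they have a common parent; every cube is its own sibling). -/
def Sibling (D : DyadicSystem d E) (Q Q' : Set (Euc d)) : Prop :=
  Q' ∈ D.cubes ∧ ∃ P ∈ D.cubes, D.Child P Q ∧ D.Child P Q'

end DyadicSystem

/-- A Whitney-region structure over a dyadic system D on ∂Ω: for each cube Q a
Whitney region U_Q, a fattened Whitney region U_Q^*, and a corkscrew point
X_Q = cpt Q relative to the center x_Q at scale r_Q, with the standard properties
of the construction. -/
structure WhitneyStructure (d : ℕ) (Ω : Set (Euc d)) (D : DyadicSystem d (frontier Ω)) where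
  U : Set (Euc d) → Set (Euc d)
  Ustar : Set (Euc d) → Set (Euc d)
  cpt : Set (Euc d) → Euc d
  gamma : ℝ
  gamma_pos : 0 < gamma
  K0 : ℝ
  one_le_K0 : 1 ≤ K0
  K1 : ℝ
  one_le_K1 : 1 ≤ K1
  Ctau : ℝ
  one_le_Ctau : 1 ≤ Ctau
  U_subset_Ustar : ∀ Q ∈ D.cubes, U Q ⊆ Ustar Q
  Ustar_subset : ∀ Q ∈ D.cubes, Ustar Q ⊆ Ω
  cpt_corkscrew : ∀ Q ∈ D.cubes,
    ball (cpt Q) (gamma * D.cRad Q) ⊆ ball (D.ctr Q) (D.cRad Q) ∩ Ω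
  cpt_mem_U : ∀ Q ∈ D.cubes, ball (cpt Q) (bdist Ω (cpt Q) / 2) ⊆ U Q
  dist_bounds_U : ∀ Q ∈ D.cubes, ∀ X ∈ U Q,
    K1⁻¹ * D.len Q ≤ bdist Ω X ∧ bdist Ω X ≤ infDist X Q ∧ infDist X Q ≤ K1 * D.len Q
  dist_bounds_Ustar : ∀ Q ∈ D.cubes, ∀ X ∈ Ustar Q,
    K1⁻¹ * D.len Q ≤ bdist Ω X ∧ bdist Ω X ≤ infDist X Q ∧ infDist X Q ≤ K1 * D.len Q
  diam_comparable : ∀ Q ∈ D.cubes,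
    Ctau⁻¹ * D.len Q ≤ Metric.diam Q ∧ Metric.diam Q ≤ Ctau * D.len Q
  dist_ctr : ∀ Q ∈ D.cubes, ∀ X ∈ U Q, dist X (D.ctr Q) ≤ Ctau * K1 * D.len Q
  mem_interior_U : ∀ y ∈ Ω, ∀ yh ∈ frontier Ω, dist y yh = bdist Ω y →
    ∀ Q' ∈ D.cubes, yh ∈ Q' → Ctau⁻¹ * K0⁻¹ * dist y yh ≤ D.len Q' →
      D.len Q' ≤ Ctau * K0 * dist y yh → y ∈ interior (U Q')

namespace WhitneyStructure

variable {d : ℕ} {Ω : Set (Euc d)} {D : DyadicSystem d (frontier Ω)}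

/-- The sawtooth region Ω_{F,Q₀} = int(⋃ {U_Q : Q ∈ D_{Q₀} not contained in any
cube of the pairwise disjoint family F}). -/
def sawtooth (W : WhitneyStructure d Ω D) (F : Set (Set (Euc d))) (Q₀ : Set (Euc d)) :
    Set (Euc d) :=
  interior (⋃ Q' ∈ {Q' | Q' ∈ D.cubes ∧ Q' ⊆ Q₀ ∧ ∀ P ∈ F, ¬Q' ⊆ P}, W.U Q')

/-- The fattened sawtooth region Ω^*_{F,Q₀}, built from the fattened Whitney
regions U_Q^*. -/
def sawtoothStar (W : WhitneyStructure d Ω D) (F : Set (Set (Euc d))) (Q₀ : Set (Euc d)) :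
    Set (Euc d) :=
  interior (⋃ Q' ∈ {Q' | Q' ∈ D.cubes ∧ Q' ⊆ Q₀ ∧ ∀ P ∈ F, ¬Q' ⊆ P}, W.Ustar Q')

/-- The fattened sawtooth Ω^*_{F_S,Q} of a (semi)coherent regime S relative to one
of its cubes Q; since S = D_{F_S,Q(S)}, the cubes of D_{F_S,Q} are exactly the cubes
of S contained in Q. -/
def regimeSawtoothStar (W : WhitneyStructure d Ω D) (S : Set (Set (Euc d)))
    (Q : Set (Euc d)) : Set (Euc d) :=
  interior (⋃ Q' ∈ {Q' | Q' ∈ S ∧ Q' ⊆ Q}, W.Ustar Q')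

end WhitneyStructure

/-- S is a semicoherent stopping time regime with maximal cube QS: all cubes of S
are contained in QS ∈ S, and any cube of D between a cube of S and QS lies in S. -/
def SemicoherentRegime {d : ℕ} {E : Set (Euc d)} (D : DyadicSystem d E)
    (S : Set (Set (Euc d))) (QS : Set (Euc d)) : Prop :=
  S ⊆ D.cubes ∧ QS ∈ S ∧ (∀ Q ∈ S, Q ⊆ QS) ∧
    ∀ Q ∈ S, ∀ P ∈ D.cubes, Q ⊆ P → P ⊆ QS → P ∈ S


set_option maxHeartbeats 4000000 in
/-- **Lemma 2.12.** Let Ω ⊆ ℝ^{n+1} be a uniform domain with n-Ahlfors regular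
boundary, equipped with a dyadic system D and Whitney regions U_Q. There exists
θ₀ ∈ (0,1), depending only on the construction constants, such that for every cube
Q ∈ D, with X_Q the corkscrew point of Q, x̂_Q a touching point of X_Q, and
P_Q(θ) = x̂_Q + θ(X_Q − x̂_Q): whenever B(P_Q(θ₀), (γθ₀/10)r_Q) meets U_{Q'} for
some Q' ∈ D, we have Q' ⊆ Q and ℓ(Q') < ℓ(Q). -/
theorem whitney_touching_point_lemma
    (n : ℕ) (Ω : Set (Euc (n + 1)))
    (hΩ : UniformDomain Ω) (hAR : AhlforsRegular n (frontier Ω))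
    (D : DyadicSystem (n + 1) (frontier Ω)) (W : WhitneyStructure (n + 1) Ω D) :
    ∃ θ₀ ∈ Set.Ioo (0 : ℝ) 1,
      ∀ Q ∈ D.cubes, ∀ xh ∈ frontier Ω, dist (W.cpt Q) xh = bdist Ω (W.cpt Q) →
        ∀ Q' ∈ D.cubes,
          (ball (xh + θ₀ • (W.cpt Q - xh)) (W.gamma * θ₀ / 10 * D.cRad Q) ∩
            W.U Q').Nonempty →
          Q' ⊆ Q ∧ D.len Q' < D.len Q := by
  obtain ⟨γ, hγdef⟩ : ∃ x : ℝ, x = W.gamma := ⟨_, rfl⟩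
  obtain ⟨K, hKdef⟩ : ∃ x : ℝ, x = W.K1 := ⟨_, rfl⟩
  obtain ⟨T, hTdef⟩ : ∃ x : ℝ, x = W.Ctau := ⟨_, rfl⟩
  obtain ⟨a, hadef⟩ : ∃ x : ℝ, x = D.a0 := ⟨_, rfl⟩
  have hγ : 0 < γ := hγdef ▸ W.gamma_pos
  have hK : 1 ≤ K := hKdef ▸ W.one_le_K1
  have hT : 1 ≤ T := hTdef ▸ W.one_le_Ctau
  have ha : 0 < a := hadef ▸ D.a0_pos
  obtain ⟨A, hAdef⟩ : ∃ x : ℝ, x = K * (1 + γ / 10) := ⟨_, rfl⟩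
  have hA : 1 ≤ A := by rw [hAdef]; nlinarith
  have hApos : 0 < A := lt_of_lt_of_le one_pos hA
  have hAa : 0 < A * a := mul_pos hApos ha
  have hTKA : 0 < (T + K) * A := mul_pos (by linarith) hApos
  have hγ10 : 0 < 1 + γ / 10 := by linarith
  obtain ⟨den, hden⟩ : ∃ x : ℝ, x = 2 + A * a + (T + K) * A + (1 + γ / 10) := ⟨_, rfl⟩
  have hden2 : 2 < den := by rw [hden]; linarith
  have hdenpos : 0 < den := by linarith
  obtain ⟨θ₀, hθdef⟩ : ∃ x : ℝ, x = den⁻¹ := ⟨_, rfl⟩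
  refine ⟨θ₀, ⟨by rw [hθdef]; exact inv_pos.mpr hdenpos,
    by rw [hθdef, inv_lt_one_iff₀]; right; linarith⟩, ?_⟩
  have hθpos : 0 < θ₀ := by rw [hθdef]; exact inv_pos.mpr hdenpos
  have hθden : θ₀ * den = 1 := by rw [hθdef]; exact inv_mul_cancel₀ (ne_of_gt hdenpos)
  intro Q hQ xh hxh htouch Q' hQ' hne
  rw [← hγdef] at hne
  obtain ⟨Y, hYball, hYU⟩ := hne
  have hlenQ : 0 < D.len Q := zpow_pos (by norm_num) _
  have hlenQ' : 0 < D.len Q' := zpow_pos (by norm_num) _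
  have hcr : D.cRad Q = (100000 : ℝ)⁻¹ * a * D.len Q := by rw [hadef]; rfl
  have hrQ : 0 < D.cRad Q := by
    rw [hcr]
    exact mul_pos (mul_pos (by norm_num) ha) hlenQ
  set rQ := D.cRad Q with hrQdef
  set X := W.cpt Q with hXdef
  have hxQ : D.ctr Q ∈ frontier Ω := D.subset_E Q hQ (D.ctr_mem Q hQ)
  have hXball : X ∈ ball (D.ctr Q) rQ :=
    ((W.cpt_corkscrew Q hQ) (mem_ball_self (mul_pos W.gamma_pos hrQ))).1
  have hXxQ : dist X (D.ctr Q) < rQ := mem_ball.mp hXball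
  have hbdX : bdist Ω X < rQ :=
    lt_of_le_of_lt (Metric.infDist_le_dist_of_mem hxQ) hXxQ
  set P := xh + θ₀ • (X - xh) with hPdef
  have hPxh : dist P xh = θ₀ * bdist Ω X := by
    rw [hPdef, dist_eq_norm, add_sub_cancel_left, norm_smul, Real.norm_eq_abs,
      abs_of_pos hθpos, ← dist_eq_norm, htouch]
  have hYP : dist Y P < γ * θ₀ / 10 * rQ := mem_ball.mp hYball
  -- upper bound on bdist Ω Y
  have hbdY : bdist Ω Y < θ₀ * (1 + γ / 10) * rQ := by
    have h1 : bdist Ω Y ≤ bdist Ω P + dist Y P := Metric.infDist_le_infDist_add_dist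
    have h2 : bdist Ω P ≤ dist P xh := Metric.infDist_le_dist_of_mem hxh
    have h3 : θ₀ * bdist Ω X < θ₀ * rQ := by
      exact mul_lt_mul_of_pos_left hbdX hθpos
    calc bdist Ω Y ≤ bdist Ω P + dist Y P := h1
      _ ≤ dist P xh + dist Y P := by linarith
      _ < θ₀ * rQ + γ * θ₀ / 10 * rQ := by rw [hPxh]; linarith
      _ = θ₀ * (1 + γ / 10) * rQ := by ring
  obtain ⟨hw1, hw2, hw3⟩ := W.dist_bounds_U Q' hQ' Y hYU
  rw [← hKdef] at hw1 hw3
  have hKpos : (0 : ℝ) < K := lt_of_lt_of_le one_pos hK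
  have hlen' : D.len Q' < A * θ₀ * rQ := by
    have : K⁻¹ * D.len Q' < θ₀ * (1 + γ / 10) * rQ := lt_of_le_of_lt hw1 hbdY
    have h4 : D.len Q' < K * (θ₀ * (1 + γ / 10) * rQ) := by
      have h5 := mul_lt_mul_of_pos_left this hKpos
      rwa [← mul_assoc, mul_inv_cancel₀ (ne_of_gt hKpos), one_mul] at h5
    calc D.len Q' < K * (θ₀ * (1 + γ / 10) * rQ) := h4
      _ = A * θ₀ * rQ := by rw [hAdef]; ring
  have hAaθ : A * a * θ₀ < 1 := by
    have : A * a < den := by rw [hden]; linarith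
    calc A * a * θ₀ < den * θ₀ := by
          exact mul_lt_mul_of_pos_right this hθpos
      _ = 1 := by rw [mul_comm]; exact hθden
  have hlenlt : D.len Q' < D.len Q := by
    have : A * θ₀ * rQ = A * a * θ₀ * ((100000 : ℝ)⁻¹ * D.len Q) := by
      rw [hcr]; ring
    rw [this] at hlen'
    have h5 : A * a * θ₀ * ((100000 : ℝ)⁻¹ * D.len Q) < 1 * ((100000 : ℝ)⁻¹ * D.len Q) :=
      mul_lt_mul_of_pos_right hAaθ (by linarith)
    linarith
  refine ⟨?_, hlenlt⟩
  -- Q' ⊆ Q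
  intro q hq
  apply D.ball_subset Q hQ
  refine ⟨D.subset_E Q' hQ' hq, ?_⟩
  rw [mem_ball, ← hadef]
  -- bound dist q (D.ctr Q)
  have hQ'bdd : Bornology.IsBounded Q' := by
    have := D.subset_ball Q' hQ'
    exact (Metric.isBounded_ball.subset (fun z hz => (this hz).2))
  have hqY : dist q Y ≤ Metric.infDist Y Q' + Metric.diam Q' := by
    rw [dist_comm]
    exact Metric.dist_le_infDist_add_diam (x := Y) hQ'bdd hq
  have hdiam : Metric.diam Q' ≤ T * D.len Q' := by
    rw [hTdef]; exact (W.diam_comparable Q' hQ').2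
  have hinf : Metric.infDist Y Q' ≤ K * D.len Q' := hw3
  have hqY' : dist q Y ≤ (T + K) * D.len Q' := by
    calc dist q Y ≤ Metric.infDist Y Q' + Metric.diam Q' := hqY
      _ ≤ K * D.len Q' + T * D.len Q' := add_le_add hinf hdiam
      _ = (T + K) * D.len Q' := by ring
  have hxhxQ : dist xh (D.ctr Q) < 2 * rQ := by
    calc dist xh (D.ctr Q) ≤ dist xh X + dist X (D.ctr Q) := dist_triangle _ _ _
      _ = bdist Ω X + dist X (D.ctr Q) := by rw [dist_comm xh X, htouch]
      _ < rQ + rQ := by linarith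
      _ = 2 * rQ := by ring
  have hTK : (0 : ℝ) < T + K := by linarith
  have hqlen : (T + K) * D.len Q' < (T + K) * (A * θ₀ * rQ) :=
    mul_lt_mul_of_pos_left hlen' hTK
  have htotal : dist q (D.ctr Q) < (T + K) * (A * θ₀ * rQ) + γ * θ₀ / 10 * rQ
      + θ₀ * rQ + 2 * rQ := by
    have hPxh' : dist P xh < θ₀ * rQ := by
      rw [hPxh]; exact mul_lt_mul_of_pos_left hbdX hθpos
    calc dist q (D.ctr Q) ≤ dist q Y + dist Y P + dist P xh + dist xh (D.ctr Q) := by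
          have := dist_triangle4 q Y P (D.ctr Q)
          have h7 := dist_triangle P xh (D.ctr Q)
          linarith [dist_triangle q Y (D.ctr Q), dist_triangle Y P (D.ctr Q)]
      _ < (T + K) * (A * θ₀ * rQ) + γ * θ₀ / 10 * rQ + θ₀ * rQ + 2 * rQ := by
          linarith
  have hsmall : (T + K) * (A * θ₀ * rQ) + γ * θ₀ / 10 * rQ + θ₀ * rQ + 2 * rQ ≤ 3 * rQ := by
    have hcoef : ((T + K) * A + γ / 10 + 1) * θ₀ ≤ 1 := by
      have hle : (T + K) * A + γ / 10 + 1 ≤ den := by rw [hden]; linarith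
      calc ((T + K) * A + γ / 10 + 1) * θ₀ ≤ den * θ₀ :=
            mul_le_mul_of_nonneg_right hle (le_of_lt hθpos)
        _ = 1 := by rw [mul_comm]; exact hθden
    have h8 : ((T + K) * A + γ / 10 + 1) * θ₀ * rQ ≤ 1 * rQ :=
      mul_le_mul_of_nonneg_right hcoef (le_of_lt hrQ)
    have h9 : (T + K) * (A * θ₀ * rQ) + γ * θ₀ / 10 * rQ + θ₀ * rQ
        = ((T + K) * A + γ / 10 + 1) * θ₀ * rQ := by ring
    linarith
  have hrQlen : 3 * rQ < a * 2 ^ (-D.gen Q) := by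
    have hlen : D.len Q = (2 : ℝ) ^ (-D.gen Q) := rfl
    rw [hcr, hlen]
    have h2p : (0 : ℝ) < a * (2 : ℝ) ^ (-D.gen Q) :=
      mul_pos ha (zpow_pos (by norm_num) _)
    have h2q : 3 * ((100000 : ℝ)⁻¹ * a * (2 : ℝ) ^ (-D.gen Q))
        = (3 / 100000) * (a * (2 : ℝ) ^ (-D.gen Q)) := by ring
    rw [h2q]
    linarith
  linarith
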